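/- The complementation map ω on type B_n partitions without zero-block preserves the number of singleton pairs and preserves the number of adjacency pairs: s_{ω(π)} = s_π and a_{ω(π)} = a_π for every such π. -/

import Mathlib

/-- The ground set `{±1, …, ±n}` of type `B_n` partitions, as a finset of integers. -/
noncomputable def BGround (n : ℕ) : Finset ℤ := (Finset.Icc (-(n : ℤ)) n).erase 0

/-- `P` is a set partition of the finset `S`: blocks are nonempty subsets of `S`
and every element of `S` lies in a unique block. -/
def IsPartitionOf (P : Finset (Finset ℤ)) (S : Finset ℤ) : Prop :=
  (∀ B ∈ P, B.Nonempty) ∧ (∀ B ∈ P, B ⊆ S) ∧ (∀ x ∈ S, ∃! B, B ∈ P ∧ x ∈ B)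

/-- The negation `-B` of a block `B`. -/
def negBlock (B : Finset ℤ) : Finset ℤ := B.image (fun x => -x)

/-- `P` is a type `B_n` set partition without zero-block: a set partition of
`{±1, …, ±n}` such that the negation of every block is a block and no block is
self-negating. -/
def IsBPartNZ (n : ℕ) (P : Finset (Finset ℤ)) : Prop :=
  IsPartitionOf P (BGround n) ∧ (∀ B ∈ P, negBlock B ∈ P) ∧ ∀ B ∈ P, negBlock B ≠ B

/-- The number of singleton pairs `±i` of `P`, i.e. of `i ∈ [n]` with `{i}` a block. -/
noncomputable def spairs (n : ℕ) (P : Finset (Finset ℤ)) : ℕ :=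
  ((Finset.Icc (1 : ℤ) n).filter (fun i => {i} ∈ P)).card

/-- The cyclic successor of `j` in `{1, …, n}` (so `n` is followed by `1`). -/
def bnext (n : ℕ) (j : ℤ) : ℤ := if j = n then 1 else j + 1

/-- The number of adjacency pairs `±(j, j+1)` of `P`, i.e. of `j ∈ [n]` with `j` and
`j+1` (mod `n`) in a common block. -/
noncomputable def apairs (n : ℕ) (P : Finset (Finset ℤ)) : ℕ :=
  ((Finset.Icc (1 : ℤ) n).filter (fun j => ∃ B ∈ P, j ∈ B ∧ bnext n j ∈ B)).card

/-- The complement of `i ∈ [±n]`: `sign(i)·(n+1−|i|)`. -/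
def bcomp (n : ℕ) (i : ℤ) : ℤ := if 0 < i then (n : ℤ) + 1 - i else -((n : ℤ) + 1 + i)

/-- The complementation map `ω`, acting blockwise on partitions of `[±n]`. -/
def bomega (n : ℕ) (P : Finset (Finset ℤ)) : Finset (Finset ℤ) :=
  P.image (fun B => B.image (bcomp n))
lemma mem_BGround {n : ℕ} {x : ℤ} : x ∈ BGround n ↔ x ≠ 0 ∧ -(n:ℤ) ≤ x ∧ x ≤ n := by
  simp [BGround, Finset.mem_erase, Finset.mem_Icc, and_assoc]

lemma bcomp_mem {n : ℕ} {x : ℤ} (hx : x ∈ BGround n) : bcomp n x ∈ BGround n := by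
  rw [mem_BGround] at *
  simp only [bcomp]; split_ifs <;> omega

lemma bcomp_bcomp {n : ℕ} {x : ℤ} (hx : x ∈ BGround n) : bcomp n (bcomp n x) = x := by
  rw [mem_BGround] at hx
  simp only [bcomp]; split_ifs <;> omega

lemma Icc_subset_BGround {n : ℕ} {x : ℤ} (hx : x ∈ Finset.Icc (1:ℤ) n) : x ∈ BGround n := by
  rw [Finset.mem_Icc] at hx; rw [mem_BGround]; omega

lemma mem_image_bcomp {n : ℕ} {C : Finset ℤ} (hC : C ⊆ BGround n) {j : ℤ}
    (hj : j ∈ BGround n) : j ∈ C.image (bcomp n) ↔ bcomp n j ∈ C := by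
  simp only [Finset.mem_image]
  constructor
  · rintro ⟨x, hx, rfl⟩
    rwa [bcomp_bcomp (hC hx)]
  · intro h
    exact ⟨bcomp n j, h, bcomp_bcomp hj⟩

lemma singleton_mem_bomega {n : ℕ} {P : Finset (Finset ℤ)} (hP : IsBPartNZ n P)
    {i : ℤ} (hi : i ∈ BGround n) : {i} ∈ bomega n P ↔ {bcomp n i} ∈ P := by
  constructor
  · intro h
    simp only [bomega, Finset.mem_image] at h
    obtain ⟨C, hCP, hC⟩ := h
    have hsub := hP.1.2.1 C hCP
    have hinj : Set.InjOn (bcomp n) C := fun a ha b hb hab => by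
      have h2 := congrArg (bcomp n) hab
      rwa [bcomp_bcomp (hsub ha), bcomp_bcomp (hsub hb)] at h2
    have hcard : C.card = 1 := by
      rw [← Finset.card_image_of_injOn hinj, hC, Finset.card_singleton]
    obtain ⟨x, hx⟩ := Finset.card_eq_one.mp hcard
    subst hx
    have hbx : bcomp n x = i := by
      have h3 : bcomp n x ∈ ({i} : Finset ℤ) := by rw [← hC]; simp
      simpa using h3
    have hxg : x ∈ BGround n := hsub (by simp)
    have : bcomp n i = x := by rw [← hbx, bcomp_bcomp hxg]
    rwa [this]
  · intro h
    simp only [bomega, Finset.mem_image]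
    exact ⟨{bcomp n i}, h, by simp [Finset.image_singleton, bcomp_bcomp hi]⟩

lemma adj_mem_bomega {n : ℕ} {P : Finset (Finset ℤ)} (hP : IsBPartNZ n P)
    {j : ℤ} (hj : j ∈ BGround n) (hj' : bnext n j ∈ BGround n) :
    (∃ B ∈ bomega n P, j ∈ B ∧ bnext n j ∈ B) ↔
      ∃ C ∈ P, bcomp n j ∈ C ∧ bcomp n (bnext n j) ∈ C := by
  simp only [bomega, Finset.mem_image]
  constructor
  · rintro ⟨B, ⟨C, hCP, rfl⟩, h1, h2⟩
    have hsub := hP.1.2.1 C hCP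
    exact ⟨C, hCP, (mem_image_bcomp hsub hj).mp h1, (mem_image_bcomp hsub hj').mp h2⟩
  · rintro ⟨C, hCP, h1, h2⟩
    have hsub := hP.1.2.1 C hCP
    exact ⟨_, ⟨C, hCP, rfl⟩, (mem_image_bcomp hsub hj).mpr h1, (mem_image_bcomp hsub hj').mpr h2⟩
lemma bnext_mem_Icc {n : ℕ} {j : ℤ} (hj : j ∈ Finset.Icc (1:ℤ) n) :
    bnext n j ∈ Finset.Icc (1:ℤ) n := by
  rw [Finset.mem_Icc] at *
  simp only [bnext]; split_ifs <;> omega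

lemma sigma_spec {n : ℕ} {j : ℤ} (hj : j ∈ Finset.Icc (1:ℤ) n) :
    (if j = (n:ℤ) then (n:ℤ) else n - j) = bcomp n (bnext n j) ∧
    bnext n (if j = (n:ℤ) then (n:ℤ) else n - j) = bcomp n j := by
  rw [Finset.mem_Icc] at hj
  simp only [bcomp, bnext]
  constructor <;> (split_ifs <;> omega)

lemma sigma_mem {n : ℕ} {j : ℤ} (hj : j ∈ Finset.Icc (1:ℤ) n) :
    (if j = (n:ℤ) then (n:ℤ) else n - j) ∈ Finset.Icc (1:ℤ) n := by
  rw [Finset.mem_Icc] at *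
  split_ifs <;> omega

/-- `ω` preserves the number of singleton pairs and the number of adjacency pairs. -/
theorem bomega_preserves (n : ℕ) (P : Finset (Finset ℤ)) (hP : IsBPartNZ n P) :
    spairs n (bomega n P) = spairs n P ∧ apairs n (bomega n P) = apairs n P := by
  have hbc : ∀ i : ℤ, i ∈ Finset.Icc (1:ℤ) n → bcomp n i = (n:ℤ)+1-i := by
    intro i hi
    rw [Finset.mem_Icc] at hi
    simp only [bcomp]; rw [if_pos]; omega
  constructor
  · unfold spairs
    apply Finset.card_nbij' (fun i => (n:ℤ)+1-i) (fun i => (n:ℤ)+1-i)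
    · intro a ha
      simp only [Finset.mem_coe, Finset.mem_filter] at *
      obtain ⟨ha1, ha2⟩ := ha
      have ha1' := Finset.mem_Icc.mp ha1
      have hmem : (n:ℤ)+1-a ∈ Finset.Icc (1:ℤ) n := by rw [Finset.mem_Icc]; omega
      refine ⟨hmem, ?_⟩
      have := (singleton_mem_bomega hP (Icc_subset_BGround ha1)).mp ha2
      rwa [hbc a ha1] at this
    · intro a ha
      simp only [Finset.mem_coe, Finset.mem_filter] at *
      obtain ⟨ha1, ha2⟩ := ha
      have ha1' := Finset.mem_Icc.mp ha1
      have hmem : (n:ℤ)+1-a ∈ Finset.Icc (1:ℤ) n := by rw [Finset.mem_Icc]; omega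
      refine ⟨hmem, ?_⟩
      rw [singleton_mem_bomega hP (Icc_subset_BGround hmem), hbc _ hmem]
      have : (n:ℤ)+1-((n:ℤ)+1-a) = a := by ring
      rwa [this]
    · intro a ha; ring
    · intro a ha; ring
  · unfold apairs
    apply Finset.card_nbij' (fun j => if j = (n:ℤ) then (n:ℤ) else n - j)
      (fun j => if j = (n:ℤ) then (n:ℤ) else n - j)
    · intro a ha
      simp only [Finset.mem_coe, Finset.mem_filter] at *
      obtain ⟨ha1, ha2⟩ := ha
      refine ⟨sigma_mem ha1, ?_⟩
      obtain ⟨C, hCP, h1, h2⟩ := (adj_mem_bomega hP (Icc_subset_BGround ha1)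
        (Icc_subset_BGround (bnext_mem_Icc ha1))).mp ha2
      obtain ⟨hs1, hs2⟩ := sigma_spec ha1
      exact ⟨C, hCP, by rw [hs1]; exact h2, by rw [hs2]; exact h1⟩
    · intro a ha
      simp only [Finset.mem_coe, Finset.mem_filter] at *
      obtain ⟨ha1, ha2⟩ := ha
      refine ⟨sigma_mem ha1, ?_⟩
      obtain ⟨C, hCP, h1, h2⟩ := ha2
      obtain ⟨hs1, hs2⟩ := sigma_spec ha1
      rw [adj_mem_bomega hP (Icc_subset_BGround (sigma_mem ha1))
        (Icc_subset_BGround (bnext_mem_Icc (sigma_mem ha1)))]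
      refine ⟨C, hCP, ?_, ?_⟩
      · rw [hs1, bcomp_bcomp (Icc_subset_BGround (bnext_mem_Icc ha1))]; exact h2
      · rw [hs2, bcomp_bcomp (Icc_subset_BGround ha1)]; exact h1
    · intro a ha
      have := Finset.mem_Icc.mp (Finset.mem_filter.mp ha).1
      beta_reduce; split_ifs <;> omega
    · intro a ha
      have := Finset.mem_Icc.mp (Finset.mem_filter.mp ha).1
      beta_reduce; split_ifs <;> omega
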